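/- arXiv:2301.09161 — 6 statements merged into one kernel-verified Lean document; each statement's English description precedes it below -/
import Mathlib

section
/- With the locally budgeted uncertainty set Λ(Γ) = { c : c = c̲ + λ, 0 ≤ λ_j ≤ d_j, ∑_{j∈P_k} λ_j ≤ Γ_k ∀k } and x ∈ {0,1}^n, the robustness value max_{c ∈ Λ(Γ)} c^t x equals the minimum over π ∈ {0,1}^K and ρ ∈ {0,1}^n satisfying π_k + ρ_j ≥ x_j for all k ∈ [K] and j ∈ P_k, of c̲^t x + Γ^t π + d^t ρ. -/
/-!
The inner maximisation decouples over the blocks `P k`. On block `k`, with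
`D k = ∑ j ∈ P k, d j * x j`, the largest attainable extra cost is `min (Γ k) (D k)`: the budget
and the bounds `lam j ≤ d j` each cap it, and scaling `lam j = d j * x j` by `min 1 (Γ k / D k)`
reaches the cap. Dually, a binary cover of block `k` pays either `Γ k` (`π k = 1`) or at least
`D k` (`π k = 0`, forcing `ρ j ≥ x j`), and the cheaper of the two is attained. Both optimal
values are therefore `∑ j, cbar j * x j + ∑ k, min (Γ k) (D k)`.
-/

open Finset

section Block

variable {ι : Type*} {s : Finset ι} {d x : ι → ℝ} {Γ : ℝ}

lemma sum_mul_le_min_sum_mul {lam : ι → ℝ} (hx : ∀ j, 0 ≤ x j ∧ x j ≤ 1)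
    (hlam : ∀ j, 0 ≤ lam j ∧ lam j ≤ d j) (hbudget : ∑ j ∈ s, lam j ≤ Γ) :
    ∑ j ∈ s, lam j * x j ≤ min Γ (∑ j ∈ s, d j * x j) :=
  le_min
    (calc ∑ j ∈ s, lam j * x j ≤ ∑ j ∈ s, lam j :=
          sum_le_sum fun j _ => mul_le_of_le_one_right (hlam j).1 (hx j).2
      _ ≤ Γ := hbudget)
    (sum_le_sum fun j _ => mul_le_mul_of_nonneg_right (hlam j).2 (hx j).1)

lemma min_sum_mul_le_mul_add_sum_mul {π : ℝ} {ρ : ι → ℝ} (hd : ∀ j, 0 ≤ d j)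
    (hπ : π = 0 ∨ π = 1) (hρ : ∀ j, 0 ≤ ρ j) (hcover : ∀ j ∈ s, x j ≤ π + ρ j) :
    min Γ (∑ j ∈ s, d j * x j) ≤ Γ * π + ∑ j ∈ s, d j * ρ j := by
  rcases hπ with rfl | rfl
  · have hcost : ∑ j ∈ s, d j * x j ≤ ∑ j ∈ s, d j * ρ j :=
      sum_le_sum fun j hj => mul_le_mul_of_nonneg_left (by simpa using hcover j hj) (hd j)
    simpa using min_le_of_right_le hcost
  · have hcost : 0 ≤ ∑ j ∈ s, d j * ρ j := sum_nonneg fun j _ => mul_nonneg (hd j) (hρ j)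
    simpa using min_le_of_left_le (le_add_of_nonneg_right hcost)

end Block

-- On a block with `D = 0` the junk value `Γ / 0 = 0` gives the factor `0`, which is still optimal.
lemma min_one_div_mul_self {Γ D : ℝ} (hΓ : 0 ≤ Γ) (hD : 0 ≤ D) :
    min 1 (Γ / D) * D = min Γ D := by
  rcases hD.eq_or_lt with rfl | hD
  · simpa using hΓ
  · rw [min_mul_of_nonneg _ _ hD.le, one_mul, div_mul_cancel₀ _ hD.ne', min_comm]

lemma mul_ite_add_mul_one_sub_ite (Γ D : ℝ) :
    Γ * (if Γ ≤ D then 1 else 0) + D * (1 - if Γ ≤ D then 1 else 0) = min Γ D := by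
  split_ifs with h
  · simp [min_eq_left h]
  · simp [min_eq_right (not_le.mp h).le]

section Partition

variable {ι κ : Type*} {P : κ → Finset ι} (hP : ∀ j, ∃! k, j ∈ P k)

noncomputable def blockIndex (j : ι) : κ := (hP j).exists.choose

lemma blockIndex_eq_iff {j : ι} {k : κ} : blockIndex hP j = k ↔ j ∈ P k :=
  ⟨fun h => h ▸ (hP j).exists.choose_spec, (hP j).unique (hP j).exists.choose_spec⟩

lemma sum_apply_blockIndex {M : Type*} [AddCommMonoid M] (g : κ → ι → M) (k : κ) :
    ∑ j ∈ P k, g (blockIndex hP j) j = ∑ j ∈ P k, g k j :=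
  sum_congr rfl fun j hj => by rw [(blockIndex_eq_iff hP).2 hj]

variable [Fintype ι] [Fintype κ]
include hP

lemma sum_eq_sum_sum_of_existsUnique_mem {M : Type*} [AddCommMonoid M] (f : ι → M) :
    ∑ j, f j = ∑ k, ∑ j ∈ P k, f j := by
  classical
  rw [← sum_fiberwise univ (blockIndex hP) f]
  refine sum_congr rfl fun k _ => sum_congr ?_ fun _ _ => rfl
  ext j
  simp [blockIndex_eq_iff hP]

variable {d x : ι → ℝ} {Γ : κ → ℝ}

lemma sum_mul_le_sum_min {lam : ι → ℝ} (hx : ∀ j, 0 ≤ x j ∧ x j ≤ 1)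
    (hlam : ∀ j, 0 ≤ lam j ∧ lam j ≤ d j) (hbudget : ∀ k, ∑ j ∈ P k, lam j ≤ Γ k) :
    ∑ j, lam j * x j ≤ ∑ k, min (Γ k) (∑ j ∈ P k, d j * x j) := by
  rw [sum_eq_sum_sum_of_existsUnique_mem hP]
  exact sum_le_sum fun k _ => sum_mul_le_min_sum_mul hx hlam (hbudget k)

lemma sum_min_le_sum_mul_add_sum_mul {π : κ → ℝ} {ρ : ι → ℝ} (hd : ∀ j, 0 ≤ d j)
    (hπ : ∀ k, π k = 0 ∨ π k = 1) (hρ : ∀ j, 0 ≤ ρ j)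
    (hcover : ∀ k, ∀ j ∈ P k, x j ≤ π k + ρ j) :
    ∑ k, min (Γ k) (∑ j ∈ P k, d j * x j) ≤ ∑ k, Γ k * π k + ∑ j, d j * ρ j := by
  rw [sum_eq_sum_sum_of_existsUnique_mem hP, ← sum_add_distrib]
  exact sum_le_sum fun k _ => min_sum_mul_le_mul_add_sum_mul hd (hπ k) hρ (hcover k)

lemma exists_budgeted_sum_mul_eq_sum_min (hd : ∀ j, 0 ≤ d j) (hΓ : ∀ k, 0 ≤ Γ k)
    (hx : ∀ j, x j = 0 ∨ x j = 1) :
    ∃ lam : ι → ℝ, (∀ j, 0 ≤ lam j ∧ lam j ≤ d j) ∧ (∀ k, ∑ j ∈ P k, lam j ≤ Γ k) ∧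
      ∑ j, lam j * x j = ∑ k, min (Γ k) (∑ j ∈ P k, d j * x j) := by
  set D : κ → ℝ := fun k => ∑ j ∈ P k, d j * x j
  set t : κ → ℝ := fun k => min 1 (Γ k / D k)
  have hD : ∀ k, 0 ≤ D k := fun k =>
    sum_nonneg fun j _ => mul_nonneg (hd j) (by rcases hx j with h | h <;> simp [h])
  have ht : ∀ k, 0 ≤ t k ∧ t k ≤ 1 := fun k =>
    ⟨le_min zero_le_one (div_nonneg (hΓ k) (hD k)), min_le_left _ _⟩
  have hblock : ∀ k, ∑ j ∈ P k, t (blockIndex hP j) * (d j * x j) = min (Γ k) (D k) := fun k => by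
    rw [sum_apply_blockIndex hP (fun k j => t k * (d j * x j)), ← mul_sum]
    exact min_one_div_mul_self (hΓ k) (hD k)
  refine ⟨fun j => t (blockIndex hP j) * (d j * x j), fun j => ?_, fun k => ?_, ?_⟩
  · have ⟨ht0, ht1⟩ := ht (blockIndex hP j)
    rcases hx j with h | h
    · simp [h, hd j]
    · simp only [h, mul_one]
      exact ⟨mul_nonneg ht0 (hd j), mul_le_of_le_one_left (hd j) ht1⟩
  · exact (hblock k).le.trans (min_le_left _ _)
  · have hidem : ∀ j, t (blockIndex hP j) * (d j * x j) * x j = t (blockIndex hP j) * (d j * x j) :=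
      fun j => by rcases hx j with h | h <;> simp [h]
    simp only [hidem, sum_eq_sum_sum_of_existsUnique_mem hP, hblock, D]

lemma exists_binary_cover_eq_sum_min (hx : ∀ j, x j = 0 ∨ x j = 1) :
    ∃ π : κ → ℝ, ∃ ρ : ι → ℝ, (∀ k, π k = 0 ∨ π k = 1) ∧ (∀ j, ρ j = 0 ∨ ρ j = 1) ∧
      (∀ k, ∀ j ∈ P k, x j ≤ π k + ρ j) ∧
      ∑ k, Γ k * π k + ∑ j, d j * ρ j = ∑ k, min (Γ k) (∑ j ∈ P k, d j * x j) := by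
  set π : κ → ℝ := fun k => if Γ k ≤ ∑ j ∈ P k, d j * x j then 1 else 0
  have hπ : ∀ k, π k = 0 ∨ π k = 1 := fun k => by
    simp only [π]
    split_ifs <;> simp
  refine ⟨π, fun j => x j * (1 - π (blockIndex hP j)), hπ, fun j => ?_, fun k j hj => ?_, ?_⟩
  · rcases hx j with h | h <;> rcases hπ (blockIndex hP j) with h' | h' <;> simp [h, h']
  · dsimp only
    rw [(blockIndex_eq_iff hP).2 hj]
    rcases hx j with h | h <;> rcases hπ k with h' | h' <;> simp [h, h']
  · rw [sum_eq_sum_sum_of_existsUnique_mem hP (fun j => d j * (x j * (1 - π (blockIndex hP j)))),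
      ← sum_add_distrib]
    refine sum_congr rfl fun k _ => ?_
    rw [sum_apply_blockIndex hP (fun k j => d j * (x j * (1 - π k)))]
    simp only [← mul_assoc, ← sum_mul]
    exact mul_ite_add_mul_one_sub_ite _ _

end Partition

theorem stmt_3_general (n K : ℕ) (P : Fin K → Finset (Fin n)) (hP : ∀ j, ∃! k, j ∈ P k)
    (cbar d : Fin n → ℝ) (hd : ∀ j, 0 ≤ d j)
    (Γ : Fin K → ℝ) (hΓ : ∀ k, 0 ≤ Γ k)
    (x : Fin n → ℝ) (hx : ∀ j, x j = 0 ∨ x j = 1) :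
    ∃ V : ℝ,
      IsGreatest
        {y | ∃ lam : Fin n → ℝ, (∀ j, 0 ≤ lam j ∧ lam j ≤ d j) ∧
          (∀ k, ∑ j ∈ P k, lam j ≤ Γ k) ∧ y = ∑ j, (cbar j + lam j) * x j} V ∧
      IsLeast
        {y | ∃ π : Fin K → ℝ, ∃ ρ : Fin n → ℝ,
          (∀ k, π k = 0 ∨ π k = 1) ∧ (∀ j, ρ j = 0 ∨ ρ j = 1) ∧
          (∀ k, ∀ j ∈ P k, x j ≤ π k + ρ j) ∧
          y = ∑ j, cbar j * x j + ∑ k, Γ k * π k + ∑ j, d j * ρ j} V := by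
  have hx01 : ∀ j, 0 ≤ x j ∧ x j ≤ 1 := fun j => by rcases hx j with h | h <;> simp [h]
  refine ⟨∑ j, cbar j * x j + ∑ k, min (Γ k) (∑ j ∈ P k, d j * x j), ⟨?_, ?_⟩, ⟨?_, ?_⟩⟩
  · obtain ⟨lam, hlam, hbudget, hsum⟩ := exists_budgeted_sum_mul_eq_sum_min hP hd hΓ hx
    exact ⟨lam, hlam, hbudget, by simp only [add_mul, sum_add_distrib, hsum]⟩
  · rintro _ ⟨lam, hlam, hbudget, rfl⟩
    simp only [add_mul, sum_add_distrib]
    exact add_le_add_right (sum_mul_le_sum_min hP hx01 hlam hbudget) _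
  · obtain ⟨π, ρ, hπ, hρ, hcover, hsum⟩ := exists_binary_cover_eq_sum_min hP hx (d := d) (Γ := Γ)
    exact ⟨π, ρ, hπ, hρ, hcover, by rw [add_assoc, hsum]⟩
  · rintro _ ⟨π, ρ, hπ, hρ, hcover, rfl⟩
    have hρ0 : ∀ j, 0 ≤ ρ j := fun j => by rcases hρ j with h | h <;> simp [h]
    rw [add_assoc]
    exact add_le_add_right (sum_min_le_sum_mul_add_sum_mul hP hd hπ hρ0 hcover) _

theorem stmt_3 (n K : ℕ) (P : Fin K → Finset (Fin n)) (hP : ∀ j, ∃! k, j ∈ P k)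
    (cbar d : Fin n → ℝ) (hc : ∀ j, 0 ≤ cbar j) (hd : ∀ j, 0 ≤ d j)
    (Γ : Fin K → ℝ) (hΓ : ∀ k, 0 ≤ Γ k)
    (x : Fin n → ℝ) (hx : ∀ j, x j = 0 ∨ x j = 1) :
    ∃ V : ℝ,
      IsGreatest
        {y | ∃ lam : Fin n → ℝ, (∀ j, 0 ≤ lam j ∧ lam j ≤ d j) ∧
          (∀ k, ∑ j ∈ P k, lam j ≤ Γ k) ∧ y = ∑ j, (cbar j + lam j) * x j} V ∧
      IsLeast
        {y | ∃ π : Fin K → ℝ, ∃ ρ : Fin n → ℝ,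
          (∀ k, π k = 0 ∨ π k = 1) ∧ (∀ j, ρ j = 0 ∨ ρ j = 1) ∧
          (∀ k, ∀ j ∈ P k, x j ≤ π k + ρ j) ∧
          y = ∑ j, cbar j * x j + ∑ k, Γ k * π k + ∑ j, d j * ρ j} V :=
  stmt_3_general n K P hP cbar d hd Γ hΓ x hx
end

section
/- In the generalized toy problem with n + 1 variables (minimize c^t x over x ∈ {0,1}^{n+1} with ∑_j x_j = 1, c̲_j = 10 for j ≤ n, c̲_{n+1} = 11.5, d_j = 2 for j ≤ n, d_{n+1} = 0, P_k = {k}), with uncertainty set Ω² = [0,1]^{n+1}: for each i ≤ n, the unit vector e_i is the unique robust solution for any Γ ∈ Ω² with Γ_i < Γ_j for all j ≤ n, j ≠ i. Consequently, any set S ⊆ {0,1}^{n+1} such that for every Γ ∈ Ω² some x ∈ S is a robust solution for Γ must contain at least n elements. -/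
/-- Nominal costs of the generalized toy problem: `c̲_j = 10` for `j ≤ n`, `c̲_{n+1} = 11.5`. -/
noncomputable def gtoyC (n : ℕ) : Fin (n + 1) → ℝ := fun j => if (j : ℕ) < n then 10 else 11.5

/-- Deviations of the generalized toy problem: `d_j = 2` for `j ≤ n`, `d_{n+1} = 0`. -/
noncomputable def gtoyD (n : ℕ) : Fin (n + 1) → ℝ := fun j => if (j : ℕ) < n then 2 else 0

/-- Feasible set: binary vectors summing to one. -/
def gtoyFeas (n : ℕ) (x : Fin (n + 1) → ℝ) : Prop :=
  (∀ j, x j = 0 ∨ x j = 1) ∧ ∑ j, x j = 1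

/-- Robustness value `v(W(x,Γ))` with partition `P_k = {k}`. -/
noncomputable def gtoyWval (n : ℕ) (x Γ : Fin (n + 1) → ℝ) : ℝ :=
  sSup {y | ∃ lam : Fin (n + 1) → ℝ,
    (∀ j, 0 ≤ lam j ∧ lam j ≤ gtoyD n j ∧ lam j ≤ Γ j) ∧
    y = ∑ j, (gtoyC n j + lam j) * x j}

/-- `x` is a robust solution for `Γ`. -/
noncomputable def gtoyRobust (n : ℕ) (Γ x : Fin (n + 1) → ℝ) : Prop :=
  gtoyFeas n x ∧ ∀ y, gtoyFeas n y → gtoyWval n x Γ ≤ gtoyWval n y Γ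

/-- Unit vector `e_i`. -/
def gtoyE (n : ℕ) (i : Fin (n + 1)) : Fin (n + 1) → ℝ := fun j => if j = i then 1 else 0

lemma gtoyE_feas (n : ℕ) (k : Fin (n + 1)) : gtoyFeas n (gtoyE n k) := by
  constructor
  · intro j; unfold gtoyE; split <;> simp
  · simp [gtoyE]

lemma gtoyFeas_eq_e {n : ℕ} {x : Fin (n + 1) → ℝ} (hx : gtoyFeas n x) :
    ∃ k, x = gtoyE n k := by
  obtain ⟨hb, hs⟩ := hx
  have hnn : ∀ j, 0 ≤ x j := fun j => by rcases hb j with h | h <;> simp [h]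
  have hek : ∃ k, x k = 1 := by
    by_contra h
    push_neg at h
    have : ∀ j, x j = 0 := fun j => by rcases hb j with h0 | h1; exact h0; exact absurd h1 (h j)
    simp [this] at hs
  obtain ⟨k, hk⟩ := hek
  refine ⟨k, funext fun j => ?_⟩
  by_cases hj : j = k
  · simp [hj, gtoyE, hk]
  · simp only [gtoyE, if_neg hj]
    rcases hb j with h0 | h1
    · exact h0
    · exfalso
      have hsub : ({k, j} : Finset (Fin (n+1))) ⊆ Finset.univ := Finset.subset_univ _
      have h2 : ∑ m ∈ ({k, j} : Finset (Fin (n+1))), x m ≤ ∑ m, x m :=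
        Finset.sum_le_sum_of_subset_of_nonneg hsub (fun m _ _ => hnn m)
      rw [Finset.sum_pair (fun h => hj h.symm), hk, h1, hs] at h2
      linarith

lemma gtoyD_nonneg (n : ℕ) (j : Fin (n+1)) : 0 ≤ gtoyD n j := by
  unfold gtoyD; split <;> norm_num

lemma gtoyWval_e (n : ℕ) (Γ : Fin (n + 1) → ℝ) (hΓ : ∀ j, 0 ≤ Γ j) (k : Fin (n + 1)) :
    gtoyWval n (gtoyE n k) Γ = gtoyC n k + min (gtoyD n k) (Γ k) := by
  unfold gtoyWval
  have hsum : ∀ lam : Fin (n+1) → ℝ,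
      ∑ j, (gtoyC n j + lam j) * gtoyE n k j = gtoyC n k + lam k := by
    intro lam
    simp [gtoyE, mul_ite, Finset.sum_ite_eq']
  have hmem : gtoyC n k + min (gtoyD n k) (Γ k) ∈
      {y | ∃ lam : Fin (n + 1) → ℝ,
        (∀ j, 0 ≤ lam j ∧ lam j ≤ gtoyD n j ∧ lam j ≤ Γ j) ∧
        y = ∑ j, (gtoyC n j + lam j) * gtoyE n k j} := by
    refine ⟨fun j => min (gtoyD n j) (Γ j), fun j => ⟨?_, min_le_left _ _, min_le_right _ _⟩, ?_⟩
    · exact le_min (gtoyD_nonneg n j) (hΓ j)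
    · rw [hsum]
  apply le_antisymm
  · apply csSup_le ⟨_, hmem⟩
    rintro y ⟨lam, hlam, rfl⟩
    rw [hsum]
    have := (hlam k).2
    have h := le_min this.1 this.2
    linarith
  · apply le_csSup _ hmem
    refine ⟨gtoyC n k + gtoyD n k, ?_⟩
    rintro y ⟨lam, hlam, rfl⟩
    rw [hsum]
    have := (hlam k).2.1
    linarith

lemma gtoyWval_e' (n : ℕ) (Γ : Fin (n + 1) → ℝ) (hΓ : ∀ j, 0 ≤ Γ j ∧ Γ j ≤ 1)
    (k : Fin (n + 1)) :
    gtoyWval n (gtoyE n k) Γ = if (k : ℕ) < n then 10 + Γ k else 11.5 := by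
  rw [gtoyWval_e n Γ (fun j => (hΓ j).1) k]
  unfold gtoyC gtoyD
  by_cases hk : (k : ℕ) < n
  · rw [if_pos hk, if_pos hk, if_pos hk, min_eq_right (by linarith [(hΓ k).2])]
  · rw [if_neg hk, if_neg hk, if_neg hk, min_eq_left (hΓ k).1]
    norm_num

lemma gtoy_main (n : ℕ) (i : Fin (n + 1)) (hi : (i : ℕ) < n)
    (Γ : Fin (n + 1) → ℝ) (hΓ : ∀ j, 0 ≤ Γ j ∧ Γ j ≤ 1)
    (hlt : ∀ j : Fin (n + 1), (j : ℕ) < n → j ≠ i → Γ i < Γ j) :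
    gtoyRobust n Γ (gtoyE n i) ∧ ∀ x, gtoyRobust n Γ x → x = gtoyE n i := by
  have hvi : gtoyWval n (gtoyE n i) Γ = 10 + Γ i := by
    rw [gtoyWval_e' n Γ hΓ i, if_pos hi]
  constructor
  · refine ⟨gtoyE_feas n i, fun y hy => ?_⟩
    obtain ⟨k, rfl⟩ := gtoyFeas_eq_e hy
    rw [hvi, gtoyWval_e' n Γ hΓ k]
    by_cases hk : (k : ℕ) < n
    · rw [if_pos hk]
      by_cases hki : k = i
      · subst hki; exact le_refl _
      · linarith [hlt k hk hki]
    · rw [if_neg hk]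
      have := (hΓ i).2
      norm_num
      linarith
  · intro x ⟨hxf, hxmin⟩
    obtain ⟨k, rfl⟩ := gtoyFeas_eq_e hxf
    have h := hxmin (gtoyE n i) (gtoyE_feas n i)
    rw [hvi, gtoyWval_e' n Γ hΓ k] at h
    by_cases hk : (k : ℕ) < n
    · rw [if_pos hk] at h
      by_cases hki : k = i
      · rw [hki]
      · exfalso; linarith [hlt k hk hki]
    · exfalso
      rw [if_neg hk] at h
      have := (hΓ i).2
      norm_num at h
      linarith

lemma gtoyE_inj (n : ℕ) : Function.Injective (gtoyE n) := by
  intro a b hab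
  have := congrFun hab a
  simp only [gtoyE, if_pos rfl] at this
  by_contra h
  rw [if_neg h] at this
  norm_num at this

theorem stmt_7 (n : ℕ) :
    (∀ i : Fin (n + 1), (i : ℕ) < n →
      ∀ Γ : Fin (n + 1) → ℝ, (∀ j, 0 ≤ Γ j ∧ Γ j ≤ 1) →
        (∀ j : Fin (n + 1), (j : ℕ) < n → j ≠ i → Γ i < Γ j) →
        gtoyRobust n Γ (gtoyE n i) ∧
        ∀ x, gtoyRobust n Γ x → x = gtoyE n i) ∧
    (∀ S : Set (Fin (n + 1) → ℝ), S.Finite →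
      (∀ Γ : Fin (n + 1) → ℝ, (∀ j, 0 ≤ Γ j ∧ Γ j ≤ 1) → ∃ x ∈ S, gtoyRobust n Γ x) →
      n ≤ S.ncard) := by
  refine ⟨fun i hi Γ hΓ hlt => gtoy_main n i hi Γ hΓ hlt, fun S hSfin hS => ?_⟩
  set f : Fin n → (Fin (n + 1) → ℝ) := fun i => gtoyE n i.castSucc with hf
  have hmem : ∀ i : Fin n, f i ∈ S := by
    intro i
    set Γ : Fin (n + 1) → ℝ := fun j => if j = i.castSucc then 0 else 1 with hΓdef
    have hΓ : ∀ j, 0 ≤ Γ j ∧ Γ j ≤ 1 := by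
      intro j; simp only [hΓdef]; split <;> norm_num
    obtain ⟨x, hxS, hxr⟩ := hS Γ hΓ
    have hic : ((i.castSucc : Fin (n+1)) : ℕ) < n := by simp
    have hlt : ∀ j : Fin (n + 1), (j : ℕ) < n → j ≠ i.castSucc → Γ i.castSucc < Γ j := by
      intro j _ hj
      simp only [hΓdef, if_pos rfl, if_neg hj]
      norm_num
    have := (gtoy_main n i.castSucc hic Γ hΓ hlt).2 x hxr
    rw [this] at hxS
    exact hxS
  have hinj : Function.Injective f := fun a b hab =>
    Fin.castSucc_injective n (gtoyE_inj n hab)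
  have hsub : Set.range f ⊆ S := by rintro _ ⟨i, rfl⟩; exact hmem i
  have hcard : (Set.range f).ncard = n := by
    rw [← Set.image_univ, Set.ncard_image_of_injective _ hinj, Set.ncard_univ, Nat.card_eq_fintype_card, Fintype.card_fin]
  have := Set.ncard_le_ncard hsub hSfin
  omega
end

section
/- Let X ⊆ {0,1}^n be finite and nonempty, let ℒ, 𝒰 ∈ ℝ^n with 0 ≤ ℒ ≤ 𝒰, and Ω = [ℒ, 𝒰]. For x ∈ X define c⁺(x)_j = ℒ_j x_j + 𝒰_j (1 − x_j). Then x is optimal for min_{y ∈ X} c^t y for some c ∈ Ω if and only if x is optimal for min_{y ∈ X} c⁺(x)^t y. -/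
theorem stmt_11 (n : ℕ) (X : Finset (Fin n → ℝ)) (hX : X.Nonempty)
    (hbin : ∀ x ∈ X, ∀ j, x j = 0 ∨ x j = 1)
    (L U : Fin n → ℝ) (hL : ∀ j, 0 ≤ L j) (hLU : ∀ j, L j ≤ U j)
    (x : Fin n → ℝ) (hx : x ∈ X) :
    (∃ c : Fin n → ℝ, (∀ j, L j ≤ c j ∧ c j ≤ U j) ∧
        ∀ y ∈ X, ∑ j, c j * x j ≤ ∑ j, c j * y j) ↔
    (∀ y ∈ X, ∑ j, (L j * x j + U j * (1 - x j)) * x j ≤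
        ∑ j, (L j * x j + U j * (1 - x j)) * y j) := by
  constructor
  · rintro ⟨c, hc, hopt⟩ y hy
    have hsum : ∑ j, c j * x j ≤ ∑ j, c j * y j := hopt y hy
    have hterm : ∀ j, (L j * x j + U j * (1 - x j)) * x j - (L j * x j + U j * (1 - x j)) * y j
        ≤ c j * x j - c j * y j := by
      intro j
      have hyj : 0 ≤ y j ∧ y j ≤ 1 := by
        rcases hbin y hy j with h | h <;> simp [h]
      rcases hbin x hx j with h | h
      · rw [h]
        have h2 : c j ≤ U j := (hc j).2
        nlinarith [hyj.1, mul_nonneg (sub_nonneg.2 h2) hyj.1]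
      · rw [h]
        have h2 : L j ≤ c j := (hc j).1
        nlinarith [hyj.2, mul_nonneg (sub_nonneg.2 h2) (sub_nonneg.2 hyj.2)]
    have h1 : ∑ j, ((L j * x j + U j * (1 - x j)) * x j - (L j * x j + U j * (1 - x j)) * y j)
        ≤ ∑ j, (c j * x j - c j * y j) := Finset.sum_le_sum (fun j _ => hterm j)
    rw [Finset.sum_sub_distrib, Finset.sum_sub_distrib] at h1
    linarith
  · intro h
    refine ⟨fun j => L j * x j + U j * (1 - x j), fun j => ?_, h⟩
    rcases hbin x hx j with hj | hj <;> refine ⟨?_, ?_⟩ <;> simp [hj] <;>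
      linarith [hL j, hLU j]
end

section
/- Let X ⊆ {0,1}^n be finite and nonempty, 0 ≤ ℒ ≤ 𝒰, Ω = [ℒ,𝒰], and {x^1,…,x^r} ⊆ X. Then sup_{c ∈ Ω, x ∈ X} ( min_i c^t x^i − c^t x ) = max_{x ∈ X} ( min_i c⁺(x)^t x^i − ℒ^t x ), where c⁺(x)_j = ℒ_j x_j + 𝒰_j(1 − x_j). Moreover, if x achieves the right-hand maximum then (c⁺(x), x) achieves the left-hand supremum. -/
theorem stmt_12 (n : ℕ) (X : Finset (Fin n → ℝ)) (hX : X.Nonempty)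
    (hbin : ∀ x ∈ X, ∀ j, x j = 0 ∨ x j = 1)
    (L U : Fin n → ℝ) (hL : ∀ j, 0 ≤ L j) (hLU : ∀ j, L j ≤ U j)
    (sols : Finset (Fin n → ℝ)) (hs : sols.Nonempty) (hsub : sols ⊆ X) :
    sSup {y | ∃ c : Fin n → ℝ, (∀ j, L j ≤ c j ∧ c j ≤ U j) ∧ ∃ x ∈ X,
        y = sols.inf' hs (fun z => ∑ j, c j * z j) - ∑ j, c j * x j} =
      X.sup' hX (fun x =>
        sols.inf' hs (fun z => ∑ j, (L j * x j + U j * (1 - x j)) * z j) - ∑ j, L j * x j) ∧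
    ∀ x ∈ X,
      (∀ y ∈ X,
        sols.inf' hs (fun z => ∑ j, (L j * y j + U j * (1 - y j)) * z j) - ∑ j, L j * y j ≤
        sols.inf' hs (fun z => ∑ j, (L j * x j + U j * (1 - x j)) * z j) - ∑ j, L j * x j) →
      IsGreatest {y | ∃ c : Fin n → ℝ, (∀ j, L j ≤ c j ∧ c j ≤ U j) ∧ ∃ x' ∈ X,
          y = sols.inf' hs (fun z => ∑ j, c j * z j) - ∑ j, c j * x' j}
        (sols.inf' hs (fun z => ∑ j, (L j * x j + U j * (1 - x j)) * z j) -
          ∑ j, (L j * x j + U j * (1 - x j)) * x j) := by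
  have hsum : ∀ x ∈ X, ∑ j, (L j * x j + U j * (1 - x j)) * x j = ∑ j, L j * x j := by
    intro x hx
    refine Finset.sum_congr rfl fun j _ => ?_
    rcases hbin x hx j with h | h <;> simp [h] <;> ring
  have hbounds : ∀ x ∈ X, ∀ j, L j ≤ L j * x j + U j * (1 - x j) ∧
      L j * x j + U j * (1 - x j) ≤ U j := by
    intro x hx j
    rcases hbin x hx j with h | h <;> simp [h] <;> linarith [hLU j]
  have hkey : ∀ c : Fin n → ℝ, (∀ j, L j ≤ c j ∧ c j ≤ U j) → ∀ x ∈ X, ∀ z ∈ X,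
      ∑ j, c j * z j - ∑ j, c j * x j ≤
        ∑ j, (L j * x j + U j * (1 - x j)) * z j - ∑ j, L j * x j := by
    intro c hc x hx z hz
    rw [sub_le_sub_iff, ← Finset.sum_add_distrib, ← Finset.sum_add_distrib]
    refine Finset.sum_le_sum fun j _ => ?_
    rcases hbin x hx j with h | h <;> rcases hbin z hz j with h2 | h2 <;>
      simp [h, h2] <;> nlinarith [(hc j).1, (hc j).2, hLU j, hL j]
  set F : (Fin n → ℝ) → ℝ := fun x =>
    sols.inf' hs (fun z => ∑ j, (L j * x j + U j * (1 - x j)) * z j) - ∑ j, L j * x j with hF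
  have hub : ∀ c : Fin n → ℝ, (∀ j, L j ≤ c j ∧ c j ≤ U j) → ∀ x ∈ X,
      sols.inf' hs (fun z => ∑ j, c j * z j) - ∑ j, c j * x j ≤ F x := by
    intro c hc x hx
    simp only [hF]
    obtain ⟨z0, hz0, hz0e⟩ :=
      Finset.exists_mem_eq_inf' hs (fun z => ∑ j, (L j * x j + U j * (1 - x j)) * z j)
    have h1 : sols.inf' hs (fun z => ∑ j, c j * z j) ≤ ∑ j, c j * z0 j :=
      Finset.inf'_le _ hz0
    have h2 := hkey c hc x hx z0 (hsub hz0)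
    rw [hz0e]
    linarith
  have hubS : ∀ y ∈ {y | ∃ c : Fin n → ℝ, (∀ j, L j ≤ c j ∧ c j ≤ U j) ∧ ∃ x ∈ X,
      y = sols.inf' hs (fun z => ∑ j, c j * z j) - ∑ j, c j * x j},
      y ≤ X.sup' hX F := by
    rintro y ⟨c, hc, x, hx, rfl⟩
    exact le_trans (hub c hc x hx) (Finset.le_sup' F hx)
  have hmemS : ∀ x ∈ X, F x ∈
        {y | ∃ c : Fin n → ℝ, (∀ j, L j ≤ c j ∧ c j ≤ U j) ∧ ∃ x ∈ X,
        y = sols.inf' hs (fun z => ∑ j, c j * z j) - ∑ j, c j * x j} := by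
    intro x hx
    exact ⟨fun j => L j * x j + U j * (1 - x j), hbounds x hx, x, hx, by simp only [hF]; rw [hsum x hx]⟩
  constructor
  · obtain ⟨x0, hx0, hx0e⟩ := Finset.exists_mem_eq_sup' hX F
    show sSup _ = X.sup' hX F
    apply le_antisymm
    · exact csSup_le ⟨_, hmemS x0 hx0⟩ hubS
    · rw [hx0e]
      exact le_csSup ⟨_, hubS⟩ (hmemS x0 hx0)
  · intro x hx hmax
    constructor
    · exact ⟨fun j => L j * x j + U j * (1 - x j), hbounds x hx, x, hx, rfl⟩
    · rintro y ⟨c, hc, x', hx', rfl⟩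
      rw [hsum x hx]
      exact le_trans (hub c hc x' hx') (hmax x' hx')
end

section
/- Let x ∈ {0,1}^n, {P_k} a partition of [n], d ∈ ℝ^n_+, Γ_k ≥ 0. Define g(π_k) = Γ_k π_k + ∑_{j ∈ P_k} max(0, d_j x_j − π_k) for π_k ≥ 0. Then g attains its minimum over [0, ∞) at some π_k ∈ {0} ∪ { d_j x_j : j ∈ P_k }. If d_j x_j = 0 for all j ∈ P_k, then π_k = 0 is optimal. -/
theorem stmt_17 (n : ℕ) (Pk : Finset (Fin n)) (d x : Fin n → ℝ)
    (hd : ∀ j, 0 ≤ d j) (hx : ∀ j, x j = 0 ∨ x j = 1)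
    (Γk : ℝ) (hΓ : 0 ≤ Γk)
    (g : ℝ → ℝ)
    (hg : ∀ π, g π = Γk * π + ∑ j ∈ Pk, max 0 (d j * x j - π)) :
    (∃ π : ℝ, (π = 0 ∨ ∃ j ∈ Pk, π = d j * x j) ∧ 0 ≤ π ∧
      ∀ π' : ℝ, 0 ≤ π' → g π ≤ g π') ∧
    ((∀ j ∈ Pk, d j * x j = 0) → ∀ π' : ℝ, 0 ≤ π' → g 0 ≤ g π') := by
  set b : Fin n → ℝ := fun j => d j * x j with hbdef
  have hb0 : ∀ j, 0 ≤ b j := by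
    intro j
    rcases hx j with h | h <;> simp [hbdef, h, hd j]
  set S : Finset ℝ := insert 0 (Pk.image b) with hS
  have h0S : (0:ℝ) ∈ S := Finset.mem_insert_self _ _
  have key : ∀ π' : ℝ, 0 ≤ π' → ∃ c ∈ S, g c ≤ g π' := by
    intro π' hπ'
    set L := S.filter (fun y => y ≤ π') with hL
    have h0L : (0:ℝ) ∈ L := Finset.mem_filter.mpr ⟨h0S, hπ'⟩
    have hLne : L.Nonempty := ⟨0, h0L⟩
    set a := L.max' hLne with ha
    have haS : a ∈ S := (Finset.mem_filter.mp (L.max'_mem hLne)).1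
    have haπ : a ≤ π' := (Finset.mem_filter.mp (L.max'_mem hLne)).2
    have hdich : ∀ j ∈ Pk, b j ≤ a ∨ π' < b j := by
      intro j hj
      by_cases h : b j ≤ π'
      · exact Or.inl (L.le_max' _ (Finset.mem_filter.mpr
          ⟨Finset.mem_insert_of_mem (Finset.mem_image_of_mem b hj), h⟩))
      · exact Or.inr (not_le.mp h)
    set T := Pk.filter (fun j => π' < b j) with hT
    set m : ℝ := (T.card : ℝ) with hm
    set B : ℝ := ∑ j ∈ T, b j with hB
    have hsplit : ∀ t : ℝ, a ≤ t → (∀ j ∈ T, t ≤ b j) →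
        g t = (Γk - m) * t + B := by
      intro t hat htT
      rw [hg]
      have hdecomp : ∑ j ∈ Pk, max 0 (b j - t)
          = ∑ j ∈ T, max 0 (b j - t)
            + ∑ j ∈ Pk.filter (fun j => ¬ π' < b j), max 0 (b j - t) := by
        rw [hT, Finset.sum_filter_add_sum_filter_not]
      have h1 : ∑ j ∈ T, max 0 (b j - t) = ∑ j ∈ T, (b j - t) := by
        refine Finset.sum_congr rfl fun j hj => ?_
        have := htT j hj
        rw [max_eq_right]; linarith
      have h2 : ∑ j ∈ Pk.filter (fun j => ¬ π' < b j), max 0 (b j - t) = 0 := by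
        refine Finset.sum_eq_zero fun j hj => ?_
        have hjPk := (Finset.mem_filter.mp hj).1
        have hjle : ¬ π' < b j := (Finset.mem_filter.mp hj).2
        have hba : b j ≤ a := (hdich j hjPk).resolve_right hjle
        rw [max_eq_left]; linarith
      rw [hdecomp, h1, h2, Finset.sum_sub_distrib, Finset.sum_const, ← hB]
      ring
    have hga : g a = (Γk - m) * a + B := by
      refine hsplit a le_rfl fun j hj => ?_
      have hjπ : π' < b j := (Finset.mem_filter.mp hj).2
      linarith
    have hgπ : g π' = (Γk - m) * π' + B := by
      refine hsplit π' haπ fun j hj => ?_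
      have hjπ : π' < b j := (Finset.mem_filter.mp hj).2
      linarith
    by_cases hcase : m ≤ Γk
    · refine ⟨a, haS, ?_⟩
      rw [hga, hgπ]
      nlinarith
    · push_neg at hcase
      have hTne : T.Nonempty := by
        rw [← Finset.card_pos]
        by_contra h
        push_neg at h
        interval_cases h' : T.card
        · simp [hm, h'] at hcase; linarith
      obtain ⟨j0, hj0T, hj0min⟩ := T.exists_min_image b hTne
      have hj0Pk : j0 ∈ Pk := (Finset.mem_filter.mp hj0T).1
      have hj0π : π' < b j0 := (Finset.mem_filter.mp hj0T).2
      refine ⟨b j0, Finset.mem_insert_of_mem (Finset.mem_image_of_mem b hj0Pk), ?_⟩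
      have hgc : g (b j0) = (Γk - m) * (b j0) + B := by
        refine hsplit (b j0) (by linarith) fun j hj => hj0min j hj
      rw [hgc, hgπ]
      nlinarith
  obtain ⟨π, hπS, hπmin⟩ := S.exists_min_image g ⟨0, h0S⟩
  constructor
  · refine ⟨π, ?_, ?_, ?_⟩
    · rcases Finset.mem_insert.mp hπS with h | h
      · exact Or.inl h
      · obtain ⟨j, hj, hje⟩ := Finset.mem_image.mp h
        exact Or.inr ⟨j, hj, hje.symm⟩
    · rcases Finset.mem_insert.mp hπS with h | h
      · exact h.ge
      · obtain ⟨j, hj, hje⟩ := Finset.mem_image.mp h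
        exact hje ▸ hb0 j
    · intro π' hπ'
      obtain ⟨c, hcS, hc⟩ := key π' hπ'
      exact le_trans (hπmin c hcS) hc
  · intro hall π' hπ'
    rw [hg, hg]
    have h0 : ∑ j ∈ Pk, max 0 (b j - 0) = 0 :=
      Finset.sum_eq_zero fun j hj => by show 0 ⊔ (d j * x j - 0) = 0; rw [hall j hj]; simp
    have h1 : (0:ℝ) ≤ ∑ j ∈ Pk, max 0 (b j - π') :=
      Finset.sum_nonneg fun j hj => le_max_left _ _
    have h2 : 0 ≤ Γk * π' := mul_nonneg hΓ hπ'
    simp only [← hbdef] at *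
    rw [h0]
    linarith
end

section
/- Suppose the nominal problem P(c) = min { c^t x : x ∈ X } can be solved in time polynomial in n for every c ≥ 0, and K is a fixed constant. Define c(π)_j = c̲_j π_k + (c̲_j + d_j)(1 − π_k) for j ∈ P_k, and let X̂ = { x ∈ X : ∃ π ∈ {0,1}^K, x is optimal for P(c(π)) }. Then X̂ has at most 2^K elements, a set of optimal solutions realizing X̂ can be computed by solving 2^K nominal problems, and X̂ is a 0,Ω-multiparametric robust solution: for every Γ ∈ Ω, some x ∈ X̂ is a robust solution for Γ. -/
/-!
For binary `x`, an adversary spending at most `Γₖ` on block `Pₖ` and at most `dⱼ` on item `j`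
gains exactly `min Γₖ Dₖ(x)` on block `k`, where `Dₖ(x) = ∑_{j ∈ Pₖ} dⱼ xⱼ`. Since
`min Γₖ Dₖ = min_{πₖ ∈ {0,1}} (Γₖ πₖ + (1 - πₖ) Dₖ)`, the robust value of `x` is the minimum over
`π ∈ {0,1}ᴷ` of `Γᵗπ + c(π)ᵗx`. Exchanging the two minima, a robust solution is found among
the optimal solutions of the `2ᴷ` nominal problems `P(c(π))`.
-/

open Finset

lemma min_le_mul_add_one_sub_mul {p : ℝ} (hp : p = 0 ∨ p = 1) (a b : ℝ) :
    min a b ≤ a * p + (1 - p) * b := by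
  rcases hp with rfl | rfl <;> simp

lemma exists_binary_min_eq_mul_add_one_sub_mul (a b : ℝ) :
    ∃ p : ℝ, (p = 0 ∨ p = 1) ∧ min a b = a * p + (1 - p) * b := by
  rcases le_total a b with h | h
  · exact ⟨1, Or.inr rfl, by simp [h]⟩
  · exact ⟨0, Or.inl rfl, by simp [h]⟩

lemma min_one_div_mul_eq_min {a b : ℝ} (ha : 0 ≤ a) (hb : 0 ≤ b) : min 1 (a / b) * b = min a b := by
  rcases hb.eq_or_lt with rfl | hb
  · simp [ha]
  · rw [min_mul_of_nonneg _ _ hb.le, one_mul, div_mul_cancel₀ _ hb.ne', min_comm]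

lemma exists_mem_image_forall_le_of_eq_min_add {α β : Type*} [DecidableEq α] {X : Set α}
    {B : Finset β} (hB : B.Nonempty) {R : α → ℝ} {g : β → ℝ} {f : β → α → ℝ}
    (hle : ∀ x ∈ X, ∀ π ∈ B, R x ≤ g π + f π x) (heq : ∀ x ∈ X, ∃ π ∈ B, R x = g π + f π x)
    {xm : β → α} (hxmX : ∀ π ∈ B, xm π ∈ X) (hxm : ∀ π ∈ B, ∀ y ∈ X, f π (xm π) ≤ f π y) :
    ∃ x ∈ B.image xm, ∀ y ∈ X, R x ≤ R y := by
  obtain ⟨x₀, hx₀, hmin⟩ := (B.image xm).exists_min_image R (hB.image xm)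
  refine ⟨x₀, hx₀, fun y hy => ?_⟩
  obtain ⟨π, hπ, hRy⟩ := heq y hy
  calc R x₀ ≤ R (xm π) := hmin _ (mem_image_of_mem xm hπ)
    _ ≤ g π + f π (xm π) := hle _ (hxmX π hπ) π hπ
    _ ≤ g π + f π y := by gcongr; exact hxm π hπ y hy
    _ = R y := hRy.symm

lemma mem_iff_eq_of_existsUnique {ι κ : Type*} {P : κ → Finset ι} {blk : ι → κ}
    (hP : ∀ j, ∃! k, j ∈ P k) (hblk : ∀ j, j ∈ P (blk j)) (j : ι) (k : κ) :
    j ∈ P k ↔ blk j = k :=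
  ⟨fun hj => (hP j).unique (hblk j) hj, by rintro rfl; exact hblk j⟩

section Blocks

variable {ι κ : Type*} [Fintype ι] [Fintype κ]

def nominalCost (blk : ι → κ) (cbar d : ι → ℝ) (π : κ → ℝ) (x : ι → ℝ) : ℝ :=
  ∑ j, (cbar j * π (blk j) + (cbar j + d j) * (1 - π (blk j))) * x j

def worstCaseCosts (P : κ → Finset ι) (cbar d : ι → ℝ) (Γ : κ → ℝ) (x : ι → ℝ) : Set ℝ :=
  {z | ∃ lam : ι → ℝ, (∀ j, 0 ≤ lam j ∧ lam j ≤ d j) ∧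
    (∀ k, ∑ j ∈ P k, lam j ≤ Γ k) ∧ z = ∑ j, (cbar j + lam j) * x j}

def blockLoad (P : κ → Finset ι) (d x : ι → ℝ) (k : κ) : ℝ :=
  ∑ j ∈ P k, d j * x j

def worstCaseValue (P : κ → Finset ι) (cbar d : ι → ℝ) (Γ : κ → ℝ) (x : ι → ℝ) : ℝ :=
  ∑ j, cbar j * x j + ∑ k, min (Γ k) (blockLoad P d x k)

variable {P : κ → Finset ι} {blk : ι → κ} {cbar d x : ι → ℝ} {Γ : κ → ℝ}

lemma sum_eq_sum_sum_blocks (hPblk : ∀ j k, j ∈ P k ↔ blk j = k) (g : ι → ℝ) :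
    ∑ j, g j = ∑ k, ∑ j ∈ P k, g j := by
  classical
  have hP : ∀ k, P k = univ.filter (blk · = k) := fun k => by ext j; simp [hPblk]
  simp_rw [hP]
  exact (sum_fiberwise univ blk g).symm

lemma sum_mul_blk_eq (hPblk : ∀ j k, j ∈ P k ↔ blk j = k) (a : κ → ℝ) (g : ι → ℝ) :
    ∑ j, a (blk j) * g j = ∑ k, a k * ∑ j ∈ P k, g j := by
  rw [sum_eq_sum_sum_blocks hPblk]
  refine sum_congr rfl fun k _ => ?_
  rw [mul_sum]
  exact sum_congr rfl fun j hj => by rw [(hPblk j k).1 hj]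

lemma nominalCost_eq (hPblk : ∀ j k, j ∈ P k ↔ blk j = k) (π : κ → ℝ) :
    nominalCost blk cbar d π x = ∑ j, cbar j * x j + ∑ k, (1 - π k) * blockLoad P d x k := by
  simp only [nominalCost, blockLoad]
  rw [← sum_mul_blk_eq hPblk, ← sum_add_distrib]
  exact sum_congr rfl fun j _ => by ring

lemma le_worstCaseValue_of_mem_worstCaseCosts (hx : ∀ j, 0 ≤ x j ∧ x j ≤ 1)
    (hPblk : ∀ j k, j ∈ P k ↔ blk j = k) {z : ℝ} (hz : z ∈ worstCaseCosts P cbar d Γ x) :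
    z ≤ worstCaseValue P cbar d Γ x := by
  obtain ⟨lam, hlam, hlamΓ, rfl⟩ := hz
  have hsplit : ∑ j, (cbar j + lam j) * x j = ∑ j, cbar j * x j + ∑ j, lam j * x j := by
    rw [← sum_add_distrib]
    exact sum_congr rfl fun j _ => by ring
  rw [hsplit, worstCaseValue, sum_eq_sum_sum_blocks hPblk (fun j => lam j * x j)]
  gcongr with k
  refine le_min ?_ (sum_le_sum fun j _ => ?_)
  · calc ∑ j ∈ P k, lam j * x j ≤ ∑ j ∈ P k, lam j :=
          sum_le_sum fun j _ => mul_le_of_le_one_right (hlam j).1 (hx j).2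
      _ ≤ Γ k := hlamΓ k
  · exact mul_le_mul_of_nonneg_right (hlam j).2 (hx j).1

lemma worstCaseValue_mem_worstCaseCosts (hx : ∀ j, x j = 0 ∨ x j = 1)
    (hPblk : ∀ j k, j ∈ P k ↔ blk j = k) (hd : ∀ j, 0 ≤ d j) (hΓ : ∀ k, 0 ≤ Γ k) :
    worstCaseValue P cbar d Γ x ∈ worstCaseCosts P cbar d Γ x := by
  have hdx : ∀ j, 0 ≤ d j * x j ∧ d j * x j ≤ d j := fun j => by
    rcases hx j with h | h <;> simp [h, hd j]
  have hload : ∀ k, 0 ≤ blockLoad P d x k := fun k => sum_nonneg fun j _ => (hdx j).1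
  -- the adversary spends the fraction `t k` of every `dⱼ` with `xⱼ = 1` in block `k`
  set t : κ → ℝ := fun k => min 1 (Γ k / blockLoad P d x k)
  have ht : ∀ k, 0 ≤ t k ∧ t k ≤ 1 := fun k =>
    ⟨le_min zero_le_one (div_nonneg (hΓ k) (hload k)), min_le_left _ _⟩
  have htload : ∀ k, t k * blockLoad P d x k = min (Γ k) (blockLoad P d x k) := fun k =>
    min_one_div_mul_eq_min (hΓ k) (hload k)
  have hblock : ∀ k, ∑ j ∈ P k, t (blk j) * (d j * x j) = min (Γ k) (blockLoad P d x k) := by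
    intro k
    rw [← htload, blockLoad, mul_sum]
    exact sum_congr rfl fun j hj => by rw [(hPblk j k).1 hj]
  refine ⟨fun j => t (blk j) * (d j * x j), fun j => ⟨?_, ?_⟩,
    fun k => (hblock k).le.trans (min_le_left _ _), ?_⟩
  · exact mul_nonneg (ht _).1 (hdx j).1
  · exact (mul_le_of_le_one_left (hdx j).1 (ht _).2).trans (hdx j).2
  · have hsq : ∀ j, (cbar j + t (blk j) * (d j * x j)) * x j
        = cbar j * x j + t (blk j) * (d j * x j) := fun j => by
      rcases hx j with h | h <;> simp [h]
    simp_rw [hsq, sum_add_distrib, sum_eq_sum_sum_blocks hPblk (fun j => t (blk j) * (d j * x j)),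
      hblock, worstCaseValue]

lemma sSup_worstCaseCosts (hx : ∀ j, x j = 0 ∨ x j = 1) (hPblk : ∀ j k, j ∈ P k ↔ blk j = k)
    (hd : ∀ j, 0 ≤ d j) (hΓ : ∀ k, 0 ≤ Γ k) :
    sSup (worstCaseCosts P cbar d Γ x) = worstCaseValue P cbar d Γ x := by
  have hx01 : ∀ j, 0 ≤ x j ∧ x j ≤ 1 := fun j => by rcases hx j with h | h <;> simp [h]
  exact IsGreatest.csSup_eq ⟨worstCaseValue_mem_worstCaseCosts hx hPblk hd hΓ,
    fun z hz => le_worstCaseValue_of_mem_worstCaseCosts hx01 hPblk hz⟩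

lemma add_nominalCost_eq (hPblk : ∀ j k, j ∈ P k ↔ blk j = k) (π : κ → ℝ) :
    ∑ k, Γ k * π k + nominalCost blk cbar d π x
      = ∑ j, cbar j * x j + ∑ k, (Γ k * π k + (1 - π k) * blockLoad P d x k) := by
  rw [nominalCost_eq hPblk, sum_add_distrib]
  ring

lemma worstCaseValue_le_add_nominalCost (hPblk : ∀ j k, j ∈ P k ↔ blk j = k) {π : κ → ℝ}
    (hπ : ∀ k, π k = 0 ∨ π k = 1) :
    worstCaseValue P cbar d Γ x ≤ ∑ k, Γ k * π k + nominalCost blk cbar d π x := by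
  rw [add_nominalCost_eq hPblk, worstCaseValue]
  gcongr with k
  exact min_le_mul_add_one_sub_mul (hπ k) _ _

lemma exists_worstCaseValue_eq_add_nominalCost (hPblk : ∀ j k, j ∈ P k ↔ blk j = k) :
    ∃ π : κ → ℝ, (∀ k, π k = 0 ∨ π k = 1) ∧
      worstCaseValue P cbar d Γ x = ∑ k, Γ k * π k + nominalCost blk cbar d π x := by
  choose π hπ hmin using fun k => exists_binary_min_eq_mul_add_one_sub_mul (Γ k) (blockLoad P d x k)
  exact ⟨π, hπ, by rw [add_nominalCost_eq hPblk, worstCaseValue]; simp_rw [hmin]⟩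

end Blocks

theorem stmt_18_general (n K : ℕ) (X : Finset (Fin n → ℝ)) (hX : X.Nonempty)
    (hbin : ∀ x ∈ X, ∀ j, x j = 0 ∨ x j = 1)
    (P : Fin K → Finset (Fin n)) (hP : ∀ j, ∃! k, j ∈ P k)
    (blk : Fin n → Fin K) (hblk : ∀ j, j ∈ P (blk j))
    (cbar d : Fin n → ℝ) (hd : ∀ j, 0 ≤ d j)
    (Ω : Set (Fin K → ℝ)) (hΩ : ∀ Γ ∈ Ω, ∀ k, 0 ≤ Γ k) :
    ∃ S : Finset (Fin n → ℝ),
      S ⊆ X ∧ S.card ≤ 2 ^ K ∧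
      (∀ π : Fin K → ℝ, (∀ k, π k = 0 ∨ π k = 1) →
        ∃ x ∈ S, ∀ y ∈ X,
          ∑ j, (cbar j * π (blk j) + (cbar j + d j) * (1 - π (blk j))) * x j ≤
          ∑ j, (cbar j * π (blk j) + (cbar j + d j) * (1 - π (blk j))) * y j) ∧
      (∀ Γ ∈ Ω, ∃ x ∈ S, ∀ y ∈ X,
        sSup {z | ∃ lam : Fin n → ℝ, (∀ j, 0 ≤ lam j ∧ lam j ≤ d j) ∧
          (∀ k, ∑ j ∈ P k, lam j ≤ Γ k) ∧ z = ∑ j, (cbar j + lam j) * x j} ≤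
        sSup {z | ∃ lam : Fin n → ℝ, (∀ j, 0 ≤ lam j ∧ lam j ≤ d j) ∧
          (∀ k, ∑ j ∈ P k, lam j ≤ Γ k) ∧ z = ∑ j, (cbar j + lam j) * y j}) := by
  classical
  have hPblk := mem_iff_eq_of_existsUnique hP hblk
  set B := Fintype.piFinset fun _ : Fin K => ({0, 1} : Finset ℝ)
  have hmemB : ∀ π, π ∈ B ↔ ∀ k, π k = 0 ∨ π k = 1 := by simp [B]
  choose xm hxmX hxm using fun π => X.exists_min_image (nominalCost blk cbar d π) hX
  refine ⟨B.image xm, image_subset_iff.2 fun π _ => hxmX π, card_image_le.trans (by simp [B]),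
    fun π hπ => ⟨xm π, mem_image_of_mem xm ((hmemB π).2 hπ), hxm π⟩, fun Γ hΓ => ?_⟩
  have hsSup : ∀ x ∈ X, sSup (worstCaseCosts P cbar d Γ x) = worstCaseValue P cbar d Γ x :=
    fun x hx => sSup_worstCaseCosts (hbin x hx) hPblk hd (hΩ Γ hΓ)
  refine exists_mem_image_forall_le_of_eq_min_add (X := (X : Set (Fin n → ℝ)))
    (R := fun x => sSup (worstCaseCosts P cbar d Γ x)) (g := fun π => ∑ k, Γ k * π k)
    (f := nominalCost blk cbar d) ⟨0, (hmemB 0).2 fun _ => Or.inl rfl⟩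
    (fun x hx π hπ => ?_) (fun x hx => ?_) (fun π _ => hxmX π) (fun π _ => hxm π)
  · exact (hsSup x hx).trans_le (worstCaseValue_le_add_nominalCost hPblk ((hmemB π).1 hπ))
  · obtain ⟨π, hπ, heq⟩ := exists_worstCaseValue_eq_add_nominalCost (cbar := cbar) (Γ := Γ) (x := x) hPblk
    exact ⟨π, (hmemB π).2 hπ, (hsSup x hx).trans heq⟩

theorem stmt_18 (n K : ℕ) (X : Finset (Fin n → ℝ)) (hX : X.Nonempty)
    (hbin : ∀ x ∈ X, ∀ j, x j = 0 ∨ x j = 1)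
    (P : Fin K → Finset (Fin n)) (hP : ∀ j, ∃! k, j ∈ P k)
    (blk : Fin n → Fin K) (hblk : ∀ j, j ∈ P (blk j))
    (cbar d : Fin n → ℝ) (hc : ∀ j, 0 ≤ cbar j) (hd : ∀ j, 0 ≤ d j)
    (Ω : Set (Fin K → ℝ)) (hΩ : ∀ Γ ∈ Ω, ∀ k, 0 ≤ Γ k) :
    ∃ S : Finset (Fin n → ℝ),
      S ⊆ X ∧ S.card ≤ 2 ^ K ∧
      (∀ π : Fin K → ℝ, (∀ k, π k = 0 ∨ π k = 1) →
        ∃ x ∈ S, ∀ y ∈ X,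
          ∑ j, (cbar j * π (blk j) + (cbar j + d j) * (1 - π (blk j))) * x j ≤
          ∑ j, (cbar j * π (blk j) + (cbar j + d j) * (1 - π (blk j))) * y j) ∧
      (∀ Γ ∈ Ω, ∃ x ∈ S, ∀ y ∈ X,
        sSup {z | ∃ lam : Fin n → ℝ, (∀ j, 0 ≤ lam j ∧ lam j ≤ d j) ∧
          (∀ k, ∑ j ∈ P k, lam j ≤ Γ k) ∧ z = ∑ j, (cbar j + lam j) * x j} ≤
        sSup {z | ∃ lam : Fin n → ℝ, (∀ j, 0 ≤ lam j ∧ lam j ≤ d j) ∧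
          (∀ k, ∑ j ∈ P k, lam j ≤ Γ k) ∧ z = ∑ j, (cbar j + lam j) * y j}) :=
  stmt_18_general n K X hX hbin P hP blk hblk cbar d hd Ω hΩ
end
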